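/- Let f : U → ℝ² be smooth on open U ⊆ ℝ³, and suppose at p ∈ U: rank df(p) = 1, with vector fields ξ, η₂, η₃ such that η₂f = η₃f = 0 on the singular set S(f), λ₂ = det(ξf, η₂f), λ₃ = det(ξf, η₃f), and the 2×2 matrix H = [[η₂λ₂, η₃λ₂],[η₂λ₃, η₃λ₃]] satisfies det H(p) > 0 (f is a definite fold at p). Then (η₂λ₂)(p) ≠ 0; i.e. if the rank of the induced homomorphism on any 2-plane distribution containing directions ξ and η₂ is 1 at p, then p is a fold-like singular point of the induced bundle homomorphism. -/

import Mathlib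

/-- Determinant of the 2×2 matrix with columns `v`, `w`. -/
def det2 (v w : ℝ × ℝ) : ℝ := v.1 * w.2 - v.2 * w.1

/-- Directional derivative of an `ℝ²`-valued map along a vector field on `ℝ³`. -/
noncomputable def dVec (η : (Fin 3 → ℝ) → (Fin 3 → ℝ))
    (f : (Fin 3 → ℝ) → ℝ × ℝ) : (Fin 3 → ℝ) → ℝ × ℝ :=
  fun q => fderiv ℝ f q (η q)

/-- Directional derivative of a function along a vector field on `ℝ³`. -/
noncomputable def dDir (η : (Fin 3 → ℝ) → (Fin 3 → ℝ))
    (g : (Fin 3 → ℝ) → ℝ) : (Fin 3 → ℝ) → ℝ :=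
  fun q => fderiv ℝ g q (η q)

/-- Product rule for `det2` of two maps. -/
lemma fderiv_det2_apply {E : Type*} [NormedAddCommGroup E] [NormedSpace ℝ E]
    {g h : E → ℝ × ℝ} {g' h' : E →L[ℝ] ℝ × ℝ} {p : E}
    (hg : HasFDerivAt g g' p) (hh : HasFDerivAt h h' p) (v : E) :
    fderiv ℝ (fun q => det2 (g q) (h q)) p v
      = det2 (g' v) (h p) + det2 (g p) (h' v) := by
  have H := ((hg.fst.mul hh.snd).sub (hg.snd.mul hh.fst))
  have hfe : (fun q => det2 (g q) (h q))
      = fun q => (g q).1 * (h q).2 - (g q).2 * (h q).1 := rfl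
  rw [hfe, show (fun q => (g q).1 * (h q).2 - (g q).2 * (h q).1) = ((fun x => (g x).1) * fun x => (h x).2) - (fun x => (g x).2) * fun x => (h x).1 from rfl, H.fderiv]
  simp [det2]
  ring

set_option maxHeartbeats 1000000 in
/-- At a definite fold point (`det H(p) > 0`), the induced bundle homomorphism has
a fold-like singular point: `(η₂λ₂)(p) ≠ 0`. -/
theorem definite_fold_implies_fold_like
    (U : Set (Fin 3 → ℝ)) (hU : IsOpen U)
    (f : (Fin 3 → ℝ) → ℝ × ℝ) (hf : ContDiffOn ℝ (⊤ : ℕ∞) f U)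
    (ξ η₂ η₃ : (Fin 3 → ℝ) → (Fin 3 → ℝ))
    (hξ : ContDiffOn ℝ (⊤ : ℕ∞) ξ U) (hη₂ : ContDiffOn ℝ (⊤ : ℕ∞) η₂ U)
    (hη₃ : ContDiffOn ℝ (⊤ : ℕ∞) η₃ U)
    (p : Fin 3 → ℝ) (hp : p ∈ U)
    (hrank : LinearMap.rank (fderiv ℝ f p : (Fin 3 → ℝ) →ₗ[ℝ] ℝ × ℝ) = 1)
    (hnull : ∀ q ∈ U, ¬Function.Surjective (fderiv ℝ f q) →
      dVec η₂ f q = 0 ∧ dVec η₃ f q = 0)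
    (lam₂ lam₃ : (Fin 3 → ℝ) → ℝ)
    (hlam₂ : lam₂ = fun q => det2 (dVec ξ f q) (dVec η₂ f q))
    (hlam₃ : lam₃ = fun q => det2 (dVec ξ f q) (dVec η₃ f q))
    (hH : dDir η₂ lam₂ p * dDir η₃ lam₃ p
        - dDir η₃ lam₂ p * dDir η₂ lam₃ p > 0) :
    dDir η₂ lam₂ p ≠ 0 := by
  classical
  have hmem : U ∈ nhds p := hU.mem_nhds hp
  set F : (Fin 3 → ℝ) → ((Fin 3 → ℝ) →L[ℝ] ℝ × ℝ) := fderiv ℝ f with hFdef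
  -- smoothness data at p
  have hfp : ContDiffAt ℝ (⊤ : ℕ∞) f p := hf.contDiffAt hmem
  have hFc : ContDiffAt ℝ (⊤ : ℕ∞) F p := hfp.fderiv_right (by simp)
  have hFd : DifferentiableAt ℝ F p := hFc.differentiableAt (by simp)
  have hξd : DifferentiableAt ℝ ξ p :=
    (hξ.contDiffAt hmem).differentiableAt (by simp)
  have hη₂d : DifferentiableAt ℝ η₂ p :=
    (hη₂.contDiffAt hmem).differentiableAt (by simp)
  have hη₃d : DifferentiableAt ℝ η₃ p :=
    (hη₃.contDiffAt hmem).differentiableAt (by simp)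
  -- p is a singular point
  have hsurj : ¬ Function.Surjective (F p) := by
    intro hs
    have : LinearMap.range (fderiv ℝ f p : (Fin 3 → ℝ) →ₗ[ℝ] ℝ × ℝ) = ⊤ :=
      LinearMap.range_eq_top.2 hs
    have h2 : LinearMap.rank (fderiv ℝ f p : (Fin 3 → ℝ) →ₗ[ℝ] ℝ × ℝ)
        = Module.rank ℝ (ℝ × ℝ) := by
      rw [LinearMap.rank, this]
      exact rank_top ℝ (ℝ × ℝ)
    rw [hrank] at h2
    have : Module.rank ℝ (ℝ × ℝ) = 2 := by
      simp [rank_prod']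
      norm_num
    rw [this] at h2
    norm_num at h2
  obtain ⟨h2null, h3null⟩ := hnull p hp hsurj
  have h2null' : F p (η₂ p) = 0 := h2null
  have h3null' : F p (η₃ p) = 0 := h3null
  -- everything in the range of F p is a multiple of a fixed vector v₀
  obtain ⟨v₀, hv₀⟩ := rank_le_one_iff.1
    (le_of_eq (hrank : Module.rank ℝ
      ↥(LinearMap.range (fderiv ℝ f p : (Fin 3 → ℝ) →ₗ[ℝ] ℝ × ℝ)) = 1))
  have hmul : ∀ w : Fin 3 → ℝ, ∃ r : ℝ, F p w = r • (v₀ : ℝ × ℝ) := by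
    intro w
    obtain ⟨r, hr⟩ := hv₀ ⟨F p w, ⟨w, rfl⟩⟩
    exact ⟨r, by simpa [eq_comm] using congrArg Subtype.val hr⟩
  have hdet0 : ∀ w : Fin 3 → ℝ, det2 (F p (ξ p)) (F p w) = 0 := by
    intro w
    obtain ⟨r, hr⟩ := hmul (ξ p)
    obtain ⟨s, hs⟩ := hmul w
    rw [hr, hs]
    simp [det2]
    ring
  -- derivative objects
  set B := fderiv ℝ F p with hBdef
  have hsymm : ∀ v w, B v w = B w v := by
    intro v w
    have := hfp.isSymmSndFDerivAt (by rw [minSmoothness_of_isRCLikeNormedField]; exact WithTop.coe_le_coe.2 (le_top : (2 : ℕ∞) ≤ ⊤))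
    exact this v w
  -- derivative of `dVec a f` at p
  have hder : ∀ (a : (Fin 3 → ℝ) → (Fin 3 → ℝ)), DifferentiableAt ℝ a p →
      HasFDerivAt (dVec a f) ((F p).comp (fderiv ℝ a p) + B.flip (a p)) p := by
    intro a had
    exact hFd.hasFDerivAt.clm_apply had.hasFDerivAt
  have hgξ := hder ξ hξd
  have hg₂ := hder η₂ hη₂d
  have hg₃ := hder η₃ hη₃d
  -- compute all four entries of H
  have key : ∀ (a : (Fin 3 → ℝ) → (Fin 3 → ℝ)) (ha : DifferentiableAt ℝ a p)
      (b : (Fin 3 → ℝ) → (Fin 3 → ℝ)), F p (a p) = 0 →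
      dDir b (fun q => det2 (dVec ξ f q) (dVec a f q)) p
        = det2 (F p (ξ p)) (B (a p) (b p)) := by
    intro a ha b hap
    have h := fderiv_det2_apply hgξ (hder a ha) (b p)
    rw [dDir, h]
    have e1 : det2 (((F p).comp (fderiv ℝ ξ p) + B.flip (ξ p)) (b p))
        (dVec a f p) = 0 := by
      have : dVec a f p = F p (a p) := rfl
      rw [this, hap]
      simp [det2]
    have e2 : dVec ξ f p = F p (ξ p) := rfl
    rw [e1, e2, zero_add]
    have e3 : (((F p).comp (fderiv ℝ a p) + B.flip (a p)) (b p))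
        = F p (fderiv ℝ a p (b p)) + B (b p) (a p) := by
      simp
    rw [e3]
    have hadd : det2 (F p (ξ p)) (F p (fderiv ℝ a p (b p)) + B (b p) (a p))
        = det2 (F p (ξ p)) (F p (fderiv ℝ a p (b p)))
          + det2 (F p (ξ p)) (B (b p) (a p)) := by
      simp [det2]
      ring
    rw [hadd, hdet0, zero_add, hsymm (b p) (a p)]
  have e22 : dDir η₂ lam₂ p = det2 (F p (ξ p)) (B (η₂ p) (η₂ p)) := by
    rw [hlam₂]; exact key η₂ hη₂d η₂ h2null'
  have e32 : dDir η₃ lam₂ p = det2 (F p (ξ p)) (B (η₂ p) (η₃ p)) := by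
    rw [hlam₂]; exact key η₂ hη₂d η₃ h2null'
  have e23 : dDir η₂ lam₃ p = det2 (F p (ξ p)) (B (η₃ p) (η₂ p)) := by
    rw [hlam₃]; exact key η₃ hη₃d η₂ h3null'
  have ecomm : dDir η₃ lam₂ p = dDir η₂ lam₃ p := by
    rw [e32, e23, hsymm (η₂ p) (η₃ p)]
  intro h0
  rw [h0, ecomm] at hH
  nlinarith [sq_nonneg (dDir η₂ lam₃ p)]
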